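/- If a commutative square in the category Cat of small categories and functors, with sides J : A → B a cosieve, F : A → C a discrete opfibration, F̄ : B → D and J̄ : C → D, is a pushout square, then the functor F̄ (the pushout of F along the cosieve J) is a discrete opfibration. -/

import Mathlib

universe u

open CategoryTheory CategoryTheory.Limits

namespace LensPaper

section OutDefs

variable {A : Type*} [Category A] {B : Type*} [Category B] {C : Type*} [Category C]

/-- The "out-set" of an object: the collection of all morphisms out of `X`,
bundled with their targets. -/
def Out (X : A) : Type _ := Σ Y : A, X ⟶ Y

/-- The identity element of an out-set. -/
def Out.id (X : A) : Out X := ⟨X, 𝟙 X⟩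

/-- Composition of a morphism out of `X` with a morphism out of its target. -/
def Out.comp {X : A} (u : Out X) (v : Out u.1) : Out X := ⟨v.1, u.2 ≫ v.2⟩

/-- Transport of out-sets along an equality of objects. -/
def Out.cast {X Y : A} (h : X = Y) (u : Out X) : Out Y := ⟨u.1, eqToHom h.symm ≫ u.2⟩

@[simp] theorem Out.cast_rfl {X : A} (u : Out X) : Out.cast rfl u = u := by
  cases u; simp [Out.cast]; rfl

theorem Out.cast_cast {X Y Z : A} (h₁ : X = Y) (h₂ : Y = Z) (u : Out X) :
    Out.cast h₂ (Out.cast h₁ u) = Out.cast (h₁.trans h₂) u := by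
  subst h₁; subst h₂; simp

/-- The action of a functor on out-sets. -/
def mapOut (F : A ⥤ B) {X : A} (u : Out X) : Out (F.obj X) := ⟨F.obj u.1, F.map u.2⟩

theorem mapOut_cast (F : A ⥤ B) {X Y : A} (h : X = Y) (u : Out X) :
    mapOut F (Out.cast h u) = Out.cast (congrArg F.obj h) (mapOut F u) := by
  subst h; simp

/-- The set of all morphisms of a category, bundled with their endpoints. -/
def Mor (A : Type*) [Category A] : Type _ := Σ (X Y : A), X ⟶ Y

/-- The action of a functor on morphisms, as a function on bundled morphisms. -/
def mapMor (F : A ⥤ B) : Mor A → Mor B := fun m => ⟨F.obj m.1, F.obj m.2.1, F.map m.2.2⟩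

/-- The set of composable pairs of morphisms of a category. -/
def CompPair (A : Type*) [Category A] : Type _ := Σ (X Y Z : A), (X ⟶ Y) × (Y ⟶ Z)

/-- The action of a functor on composable pairs. -/
def mapCompPair (F : A ⥤ B) : CompPair A → CompPair B :=
  fun p => ⟨F.obj p.1, F.obj p.2.1, F.obj p.2.2.1, (F.map p.2.2.2.1, F.map p.2.2.2.2)⟩

/-- A functor is a discrete opfibration if every morphism out of `F.obj X`
has a unique lift to a morphism out of `X`. -/
def IsDiscreteOpfibration (F : A ⥤ B) : Prop :=
  ∀ (X : A) (u : Out (F.obj X)), ∃! v : Out X, mapOut F v = u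

/-- A cosieve is an injective-on-objects discrete opfibration. -/
def IsCosieve (F : A ⥤ B) : Prop :=
  IsDiscreteOpfibration F ∧ Function.Injective F.obj

end OutDefs

/-- An (asymmetric delta) lens: a get functor together with put functions
satisfying PutGet, PutId and PutPut. -/
structure DLens (A : Type*) (B : Type*) [Category A] [Category B] where
  get : A ⥤ B
  put : ∀ (X : A), Out (get.obj X) → Out X
  putGet : ∀ (X : A) (u : Out (get.obj X)), mapOut get (put X u) = u
  putId : ∀ (X : A), put X (Out.id (get.obj X)) = Out.id X
  putPut : ∀ (X : A) (u : Out (get.obj X)) (v : Out u.1) (h : u.1 = get.obj (put X u).1),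
      put X (u.comp v) = (put X u).comp (put (put X u).1 (Out.cast h v))

namespace DLens

variable {A : Type*} [Category A] {B : Type*} [Category B] {C : Type*} [Category C]

theorem put_cast (F : DLens A B) {X₁ X₂ : A} (e : X₁ = X₂) (u : Out (F.get.obj X₁)) :
    Out.cast e (F.put X₁ u) = F.put X₂ (Out.cast (congrArg F.get.obj e) u) := by
  subst e; simp

/-- The identity lens. -/
def id (A : Type*) [Category A] : DLens A A where
  get := Functor.id A
  put X u := u
  putGet X u := rfl
  putId X := rfl
  putPut X u v h := by
    have hv : Out.cast h v = v := Out.cast_rfl v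
    rw [hv]

/-- Composition of lenses. -/
def comp (F : DLens A B) (G : DLens B C) : DLens A C where
  get := F.get ⋙ G.get
  put X u := F.put X (G.put (F.get.obj X) u)
  putGet X u := by
    show mapOut G.get (mapOut F.get (F.put X (G.put (F.get.obj X) u))) = u
    rw [F.putGet, G.putGet]
  putId X := by
    show F.put X (G.put (F.get.obj X) (Out.id (G.get.obj (F.get.obj X)))) = Out.id X
    rw [G.putId, F.putId]
  putPut X u v h := by
    have h₁ : u.1 = G.get.obj (G.put (F.get.obj X) u).1 :=
      (congrArg Sigma.fst (G.putGet (F.get.obj X) u)).symm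
    show F.put X (G.put (F.get.obj X) (u.comp v)) = _
    rw [G.putPut (F.get.obj X) u v h₁]
    have h₂ : (G.put (F.get.obj X) u).1 =
        F.get.obj (F.put X (G.put (F.get.obj X) u)).1 :=
      (congrArg Sigma.fst (F.putGet X (G.put (F.get.obj X) u))).symm
    rw [F.putPut X (G.put (F.get.obj X) u) _ h₂]
    rw [put_cast G h₂, Out.cast_cast]

end DLens

/-- The category of small categories and (asymmetric delta) lenses. -/
def LensCat : Type (u + 1) := Cat.{u, u}

/-- Regard a small category as an object of the category of lenses. -/
def LensCat.of (C : Cat.{u, u}) : LensCat.{u} := C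

/-- The underlying small category of an object of the category of lenses. -/
def LensCat.toCat (A : LensCat.{u}) : Cat.{u, u} := A

instance : Category.{u} LensCat.{u} where
  Hom A B := DLens A.toCat B.toCat
  id A := DLens.id A.toCat
  comp F G := F.comp G
  id_comp F := rfl
  comp_id F := rfl
  assoc F G H := rfl

/-- The get functor of a lens, i.e. a morphism of `LensCat` regarded as a `DLens`. -/
def LensCat.get {A B : LensCat.{u}} (F : A ⟶ B) : A.toCat ⟶ B.toCat := (DLens.get F).toCatHom

/-- The identity-on-objects forgetful functor from the category of lenses to the
category of small categories and functors, sending a lens to its get functor. -/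
def lensForget : LensCat.{u} ⥤ Cat.{u, u} where
  obj A := A.toCat
  map F := (DLens.get F).toCatHom
  map_id A := rfl
  map_comp F G := rfl

end LensPaper
open CategoryTheory CategoryTheory.Limits LensPaper

/-!
Since `J` is a cosieve, no morphism of `B` leaves the image of `J`, so `B` is the collage of the
profunctor `(b, a) ↦ (b ⟶ J.obj a)` from the full subcategory `B₀` of objects outside the image
to `A`. Replacing `A` by `C` and this profunctor by its fibrewise sum along `F`,
`(b, c) ↦ Σ (a : F⁻¹ c), (b ⟶ J.obj a)`, gives a cocone `P` under the square whose leg from `B` is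
a discrete opfibration: over `B₀` it is a bijection on morphisms out of each object, and on the
image of `J` it is `F` followed by the inclusion of `C`. The pushout property of `D` gives
`φ : D ⟶ P` with `Fbar ≫ φ` equal to that leg; conversely the square induces `ψ : P ⥤ D`, and
`φ ≫ ψ = 𝟙 D` by uniqueness in `D`. So `φ` is injective on morphisms and `Fbar` inherits unique
lifts from `Fbar ≫ φ`.
-/

namespace LensPaper

universe w v v₁ v₂ u₁ u₂

open Opposite

section DiscreteOpfibration

variable {A : Type*} [Category A] {B : Type*} [Category B] {C : Type*} [Category C]
  {D : Type*} [Category D]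

theorem mapOut_comp (F : A ⥤ B) (G : B ⥤ C) {X : A} (v : Out X) :
    mapOut (F ⋙ G) v = mapOut G (mapOut F v) := rfl

theorem mapOut_eq_iff {F : A ⥤ B} {X : A} {v : Out X} {u : Out (F.obj X)} :
    mapOut F v = u ↔ ∃ e : F.obj v.1 = u.1, F.map v.2 ≫ eqToHom e = u.2 := by
  obtain ⟨Y, f⟩ := v
  obtain ⟨Z, g⟩ := u
  constructor
  · rintro ⟨⟩
    exact ⟨rfl, by simp⟩
  · rintro ⟨e, h⟩
    dsimp only at e h
    subst e h
    simp only [eqToHom_refl, Category.comp_id]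
    rfl

theorem mapOut_of_eq {F G : A ⥤ B} (h : F = G) {X : A} (v : Out X) :
    mapOut G v = Out.cast (Functor.congr_obj h X) (mapOut F v) := by
  subst h
  simp

theorem mapOut_injective_of_comp_eq_id {F : A ⥤ B} {G : B ⥤ A} (h : F ⋙ G = 𝟭 A) (X : A) :
    Function.Injective (mapOut F (X := X)) := by
  intro v w hvw
  have key : ∀ v : Out X, v = Out.cast (Functor.congr_obj h X) (mapOut G (mapOut F v)) :=
    mapOut_of_eq h
  rw [key v, key w, hvw]

theorem obj_eq_of_comp_eq {J : A ⥤ B} {F : A ⥤ C} {G₁ : B ⥤ D} {G₂ : C ⥤ D}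
    (h : J ⋙ G₁ = F ⋙ G₂) (a : A) : G₁.obj (J.obj a) = G₂.obj (F.obj a) :=
  Functor.congr_obj h a

theorem map_eq_of_comp_eq {J : A ⥤ B} {F : A ⥤ C} {G₁ : B ⥤ D} {G₂ : C ⥤ D}
    (h : J ⋙ G₁ = F ⋙ G₂) {a a' : A} (m : a ⟶ a') :
    G₁.map (J.map m) = eqToHom (obj_eq_of_comp_eq h a) ≫ G₂.map (F.map m) ≫
      eqToHom (obj_eq_of_comp_eq h a').symm :=
  Functor.congr_hom h m

theorem _root_.CategoryTheory.Functor.strictInv_comp (G : A ⥤ B) [G.IsIso] :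
    G.strictInv ⋙ G = 𝟭 B :=
  G.asIsomorphism.counit_eq

theorem _root_.CategoryTheory.Functor.comp_strictInv (G : A ⥤ B) [G.IsIso] :
    G ⋙ G.strictInv = 𝟭 A :=
  G.asIsomorphism.unit_eq.symm

namespace IsDiscreteOpfibration

variable {F : A ⥤ B}

noncomputable def lift (hF : IsDiscreteOpfibration F) {X : A} (u : Out (F.obj X)) : Out X :=
  (hF X u).exists.choose

theorem mapOut_lift (hF : IsDiscreteOpfibration F) {X : A} (u : Out (F.obj X)) :
    mapOut F (hF.lift u) = u :=
  (hF X u).exists.choose_spec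

theorem lift_eq (hF : IsDiscreteOpfibration F) {X : A} {u : Out (F.obj X)} {v : Out X}
    (h : mapOut F v = u) : hF.lift u = v :=
  (hF X u).unique (hF.mapOut_lift u) h

theorem obj_lift_fst (hF : IsDiscreteOpfibration F) {X : A} {Y : B} (f : F.obj X ⟶ Y) :
    F.obj (hF.lift ⟨Y, f⟩).1 = Y :=
  congrArg Sigma.fst (hF.mapOut_lift ⟨Y, f⟩)

theorem map_lift_snd (hF : IsDiscreteOpfibration F) {X : A} {Y : B} (f : F.obj X ⟶ Y) :
    F.map (hF.lift ⟨Y, f⟩).2 = f ≫ eqToHom (hF.obj_lift_fst f).symm := by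
  obtain ⟨e, h⟩ := mapOut_eq_iff.mp (hF.mapOut_lift ⟨Y, f⟩)
  exact (comp_eqToHom_iff e _ _).mp h

theorem lift_id (hF : IsDiscreteOpfibration F) (X : A) :
    hF.lift ⟨F.obj X, 𝟙 (F.obj X)⟩ = ⟨X, 𝟙 X⟩ :=
  hF.lift_eq (mapOut_eq_iff.mpr ⟨rfl, by simp⟩)

theorem lift_comp (hF : IsDiscreteOpfibration F) {X : A} {Y Z : B} (f : F.obj X ⟶ Y)
    (g : Y ⟶ Z) :
    hF.lift ⟨Z, f ≫ g⟩ =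
      (hF.lift ⟨Y, f⟩).comp (hF.lift ⟨Z, eqToHom (hF.obj_lift_fst f) ≫ g⟩) :=
  hF.lift_eq (mapOut_eq_iff.mpr ⟨hF.obj_lift_fst (eqToHom (hF.obj_lift_fst f) ≫ g),
    by simp [Out.comp, hF.map_lift_snd]⟩)

theorem mapOut_injective (hF : IsDiscreteOpfibration F) (X : A) :
    Function.Injective (mapOut F (X := X)) :=
  fun _ _ h => (hF.lift_eq h).symm.trans (hF.lift_eq rfl)

theorem faithful (hF : IsDiscreteOpfibration F) : F.Faithful :=
  ⟨fun {_ Y} f g h => eq_of_heq (Sigma.mk.inj (hF.mapOut_injective _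
    (show (⟨F.obj Y, F.map f⟩ : Out _) = ⟨F.obj Y, F.map g⟩ by rw [h]))).2⟩

theorem mem_range_of_hom (hF : IsDiscreteOpfibration F) {X : A} {Y : B} (f : F.obj X ⟶ Y) :
    Y ∈ Set.range F.obj :=
  ⟨_, hF.obj_lift_fst f⟩

protected theorem id : IsDiscreteOpfibration (𝟭 A) :=
  fun _ u => ⟨u, rfl, fun _ h => h⟩

theorem comp (hF : IsDiscreteOpfibration F) {G : B ⥤ C} (hG : IsDiscreteOpfibration G) :
    IsDiscreteOpfibration (F ⋙ G) := fun _ u =>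
  ⟨hF.lift (hG.lift u), show mapOut G (mapOut F _) = u by rw [hF.mapOut_lift, hG.mapOut_lift],
    fun v hv => (hF.lift_eq (hG.lift_eq (v := mapOut F v) hv).symm).symm⟩

theorem of_comp {G : B ⥤ C} (hFG : IsDiscreteOpfibration (F ⋙ G))
    (hG : ∀ Y, Function.Injective (mapOut G (X := Y))) : IsDiscreteOpfibration F := fun _ u =>
  ⟨hFG.lift (mapOut G u), hG _ (hFG.mapOut_lift _),
    fun _ hv => (hFG.lift_eq (show mapOut G (mapOut F _) = _ by rw [hv])).symm⟩

theorem strictInv (G : A ⥤ B) [G.IsIso] : IsDiscreteOpfibration G.strictInv :=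
  of_comp (G.strictInv_comp ▸ IsDiscreteOpfibration.id)
    (mapOut_injective_of_comp_eq_id G.comp_strictInv)

end IsDiscreteOpfibration

theorem IsCosieve.full {J : A ⥤ B} (hJ : IsCosieve J) : J.Full := by
  refine ⟨fun {X Y} g => ?_⟩
  have e : (hJ.1.lift ⟨J.obj Y, g⟩).1 = Y := hJ.2 (hJ.1.obj_lift_fst g)
  exact ⟨(hJ.1.lift ⟨J.obj Y, g⟩).2 ≫ eqToHom e, by simp [hJ.1.map_lift_snd, eqToHom_map]⟩

theorem existsUnique_lift_of_comp {J : A ⥤ B} {G : B ⥤ C} (hJ : IsDiscreteOpfibration J)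
    (hJG : IsDiscreteOpfibration (J ⋙ G)) (X : A) (u : Out (G.obj (J.obj X))) :
    ∃! v : Out (J.obj X), mapOut G v = u := by
  refine ⟨mapOut J (hJG.lift u), hJG.mapOut_lift u, fun v hv => ?_⟩
  rw [← hJ.mapOut_lift v, ← hJG.lift_eq (v := hJ.lift v)]
  rwa [mapOut_comp, hJ.mapOut_lift]

theorem existsUnique_lift_of_rightInverse {G : B ⥤ C} {X : B} (s : Out (G.obj X) → Out X)
    (hs : ∀ u, mapOut G (s u) = u) (hsurj : Function.Surjective s) (u : Out (G.obj X)) :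
    ∃! v : Out X, mapOut G v = u := by
  refine ⟨s u, hs u, fun v hv => ?_⟩
  obtain ⟨w, rfl⟩ := hsurj v
  rw [← hv, hs]

end DiscreteOpfibration

section Pushforward

variable {A : Type u₁} [Category.{v₁} A] {C : Type u₂} [Category.{v₂} C] {F : A ⥤ C}

abbrev FiberSum (F : A ⥤ C) (K : A ⥤ Type w) (c : C) : Type (max u₁ w) :=
  Σ a : {a : A // F.obj a = c}, K.obj a.1

def FiberSum.transport {K : A ⥤ Type w} {c' : C} (p : Σ a : A, K.obj a) (v : Out p.1)
    (e : F.obj v.1 = c') : FiberSum F K c' :=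
  ⟨⟨v.1, e⟩, K.map v.2 p.2⟩

theorem FiberSum.transport_congr {K : A ⥤ Type w} {c' : C} (p : Σ a : A, K.obj a)
    {v v' : Out p.1} (h : v = v') (e : F.obj v.1 = c') :
    FiberSum.transport p v e = FiberSum.transport p v' (h ▸ e) := by
  subst h
  rfl

/-- The left Kan extension of `K` along a discrete opfibration, computed fibrewise. -/
noncomputable def IsDiscreteOpfibration.pushforward (hF : IsDiscreteOpfibration F)
    (K : A ⥤ Type w) : C ⥤ Type (max u₁ w) where
  obj := FiberSum F K
  map {_ c'} k := TypeCat.ofHom fun p =>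
    FiberSum.transport ⟨p.1.1, p.2⟩ (hF.lift ⟨c', eqToHom p.1.2 ≫ k⟩) (hF.obj_lift_fst _)
  map_id c := ConcreteCategory.hom_ext _ _ <| by
    rintro ⟨⟨a, rfl⟩, x⟩
    simp only [TypeCat.ofHom_apply, types_id_apply, eqToHom_refl, Category.comp_id]
    rw [FiberSum.transport_congr _ (hF.lift_id a)]
    simp [FiberSum.transport]
  map_comp k k' := ConcreteCategory.hom_ext _ _ <| by
    rintro ⟨⟨a, rfl⟩, x⟩
    simp only [TypeCat.ofHom_apply, types_comp_apply, eqToHom_refl, Category.id_comp]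
    rw [FiberSum.transport_congr _ (hF.lift_comp k k')]
    simp only [FiberSum.transport, Out.comp, Functor.map_comp]
    rfl

theorem IsDiscreteOpfibration.pushforward_map_map (hF : IsDiscreteOpfibration F)
    (K : A ⥤ Type w) {a a' : A} (m : a ⟶ a') (x : K.obj a) :
    (hF.pushforward K).map (F.map m) ⟨⟨a, rfl⟩, x⟩ = ⟨⟨a', rfl⟩, K.map m x⟩ := by
  change FiberSum.transport ⟨a, x⟩ (hF.lift ⟨F.obj a', eqToHom rfl ≫ F.map m⟩) _ = _
  rw [FiberSum.transport_congr _ (hF.lift_eq (v := ⟨a', m⟩) (mapOut_eq_iff.mpr ⟨rfl, by simp⟩))]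
  rfl

noncomputable def IsDiscreteOpfibration.pushforwardFunctor (hF : IsDiscreteOpfibration F) :
    (A ⥤ Type w) ⥤ C ⥤ Type (max u₁ w) where
  obj := hF.pushforward
  map α :=
    { app _ := TypeCat.ofHom fun p => ⟨p.1, α.app p.1.1 p.2⟩
      naturality _ _ _ := ConcreteCategory.hom_ext _ _ fun p => by
        rw [types_comp_apply, types_comp_apply]
        exact congrArg (Sigma.mk _) (NatTrans.naturality_apply α _ p.2) }

end Pushforward

/-- The collage of a profunctor `H` from `X` to `Y`: the category on `X ⊕ Y` containing `X` and
`Y` as full subcategories, with `H x y` as the morphisms from `x` to `y` and none back. -/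
def Collage {X : Type u₁} [Category.{v} X] {Y : Type u₂} [Category.{v} Y]
    (_H : Xᵒᵖ ⥤ Y ⥤ Type v) : Type (max u₁ u₂) :=
  X ⊕ Y

namespace Collage

variable {X : Type u₁} [Category.{v} X] {Y : Type u₂} [Category.{v} Y] {H : Xᵒᵖ ⥤ Y ⥤ Type v}

abbrev Hom : Collage H → Collage H → Type v
  | Sum.inl x, Sum.inl x' => x ⟶ x'
  | Sum.inl x, Sum.inr y => (H.obj (op x)).obj y
  | Sum.inr _, Sum.inl _ => PEmpty
  | Sum.inr y, Sum.inr y' => y ⟶ y'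

def id : ∀ P : Collage H, Hom P P
  | Sum.inl x => 𝟙 x
  | Sum.inr y => 𝟙 y

def comp : ∀ {P Q R : Collage H}, Hom P Q → Hom Q R → Hom P R
  | Sum.inl _, Sum.inl _, Sum.inl _, f, g => f ≫ g
  | Sum.inl _, Sum.inl _, Sum.inr _, f, h => (H.map f.op).app _ h
  | Sum.inl _, Sum.inr _, Sum.inr _, h, k => (H.obj _).map k h
  | Sum.inr _, Sum.inr _, Sum.inr _, k, k' => k ≫ k'
  | Sum.inl _, Sum.inr _, Sum.inl _, _, g => g.elim
  | Sum.inr _, Sum.inl _, _, f, _ => f.elim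
  | Sum.inr _, Sum.inr _, Sum.inl _, _, g => g.elim

instance : Category.{v} (Collage H) where
  Hom := Hom
  id := id
  comp := comp
  id_comp := by
    rintro (x | y) (x' | y') f
    all_goals first | exact f.elim | simp [comp, id]
  comp_id := by
    rintro (x | y) (x' | y') f
    all_goals first | exact f.elim | simp [comp, id]
  assoc := by
    rintro (x | y) (x' | y') (x'' | y'') (x''' | y''') f g h
    all_goals first | exact f.elim | exact g.elim | exact h.elim | simp [comp]

def inl : X ⥤ Collage H where
  obj x := Sum.inl x
  map f := f

def inr : Y ⥤ Collage H where
  obj y := Sum.inr y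
  map k := k

def het {x : X} {y : Y} (h : (H.obj (op x)).obj y) : inl.obj x ⟶ (inr.obj y : Collage H) := h

theorem isDiscreteOpfibration_inr : IsDiscreteOpfibration (inr : Y ⥤ Collage H) := by
  rintro y ⟨x | y', k⟩
  · exact k.elim
  · exact ⟨⟨y', k⟩, rfl, fun v hv => by cases hv; rfl⟩

def desc {E : Type*} [Category E] (G₁ : X ⥤ E) (G₂ : Y ⥤ E)
    (μ : ∀ {x y}, (H.obj (op x)).obj y → (G₁.obj x ⟶ G₂.obj y))
    (hμ₁ : ∀ {x x' y} (f : x ⟶ x') (h : (H.obj (op x')).obj y),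
      μ ((H.map f.op).app y h) = G₁.map f ≫ μ h)
    (hμ₂ : ∀ {x y y'} (h : (H.obj (op x)).obj y) (k : y ⟶ y'),
      μ ((H.obj (op x)).map k h) = μ h ≫ G₂.map k) :
    Collage H ⥤ E where
  obj
    | Sum.inl x => G₁.obj x
    | Sum.inr y => G₂.obj y
  map {P Q} f := match P, Q, f with
    | Sum.inl _, Sum.inl _, f => G₁.map f
    | Sum.inl _, Sum.inr _, h => μ h
    | Sum.inr _, Sum.inr _, k => G₂.map k
  map_id := by
    rintro (x | y)
    · exact G₁.map_id x
    · exact G₂.map_id y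
  map_comp := by
    rintro (x | y) (x' | y') (x'' | y'') f g
    all_goals first | exact f.elim | exact g.elim | skip
    · exact G₁.map_comp f g
    · exact hμ₁ f g
    · exact hμ₂ f g
    · exact G₂.map_comp f g

end Collage

section CosieveDecomposition

variable {A : Type u₁} [Category.{v} A] {B : Type u₂} [Category.{v} B] (J : A ⥤ B)

def outsideRange : ObjectProperty B := fun b => b ∉ Set.range J.obj

/-- The profunctor `(b, a) ↦ (b ⟶ J.obj a)`. -/
def homToRange : (outsideRange J).FullSubcategoryᵒᵖ ⥤ A ⥤ Type v :=
  (outsideRange J).ι.op ⋙ coyoneda ⋙ (Functor.whiskeringLeft A B (Type v)).obj J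

def collageComparison : Collage (homToRange J) ⥤ B :=
  Collage.desc (outsideRange J).ι J (fun g => g) (fun _ _ => rfl) (fun _ _ => rfl)

theorem collageComparison_isIso (hJ : IsCosieve J) : (collageComparison J).IsIso where
  faithful := ⟨fun {P Q} f g h => by
    rcases P with x | a <;> rcases Q with x' | a'
    · exact ObjectProperty.hom_ext _ h
    · exact h
    · exact f.elim
    · exact hJ.1.faithful.map_injective h⟩
  full := ⟨fun {P Q} g => by
    rcases P with x | a <;> rcases Q with x' | a'
    · exact ⟨ObjectProperty.homMk g, rfl⟩
    · exact ⟨g, rfl⟩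
    · exact (x'.property (hJ.1.mem_range_of_hom g)).elim
    · exact hJ.full.map_surjective g⟩
  bijective_obj := by
    refine ⟨?_, fun b => ?_⟩
    · rintro (x | a) (x' | a') h
      · exact congrArg Sum.inl (ObjectProperty.FullSubcategory.ext h)
      · exact (x.property ⟨a', h.symm⟩).elim
      · exact (x'.property ⟨a, h⟩).elim
      · exact congrArg Sum.inr (hJ.2 h)
    · by_cases hb : b ∈ Set.range J.obj
      · obtain ⟨a, rfl⟩ := hb
        exact ⟨Sum.inr a, rfl⟩
      · exact ⟨Sum.inl ⟨b, hb⟩, rfl⟩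

end CosieveDecomposition

section PushoutAlongCosieve

variable {A B C : Type u} [Category.{u} A] [Category.{u} B] [Category.{u} C]
  {J : A ⥤ B} {F : A ⥤ C}

/-- The profunctor `(b, c) ↦ Σ (a : F⁻¹ c), (b ⟶ J.obj a)`. -/
noncomputable abbrev pushoutProfunctor (J : A ⥤ B) (hF : IsDiscreteOpfibration F) :
    (outsideRange J).FullSubcategoryᵒᵖ ⥤ C ⥤ Type u :=
  homToRange J ⋙ hF.pushforwardFunctor

noncomputable def collagePushforward (hF : IsDiscreteOpfibration F) :
    Collage (homToRange J) ⥤ Collage (pushoutProfunctor J hF) :=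
  Collage.desc Collage.inl (F ⋙ Collage.inr) (fun {_ a} g => Collage.het ⟨⟨a, rfl⟩, g⟩)
    (fun _ _ => rfl) (fun g m => (hF.pushforward_map_map _ m g).symm)

theorem collagePushforward_isDiscreteOpfibration (hF : IsDiscreteOpfibration F) :
    IsDiscreteOpfibration (collagePushforward (J := J) hF) := by
  rintro (x | a)
  · refine existsUnique_lift_of_rightInverse
      (fun | ⟨Sum.inl x', f⟩ => ⟨Sum.inl x', f⟩ | ⟨Sum.inr _, h⟩ => ⟨Sum.inr h.1.1, h.2⟩) ?_ ?_
    · rintro ⟨x' | c, f⟩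
      · rfl
      · obtain ⟨⟨a, rfl⟩, g⟩ := f
        rfl
    · rintro ⟨x' | a, f⟩
      · exact ⟨⟨Sum.inl x', f⟩, rfl⟩
      · exact ⟨⟨Sum.inr (F.obj a), ⟨⟨a, rfl⟩, f⟩⟩, rfl⟩
  · exact existsUnique_lift_of_comp (G := collagePushforward hF)
      Collage.isDiscreteOpfibration_inr (hF.comp Collage.isDiscreteOpfibration_inr) a

noncomputable def pushoutInl (hJ : IsCosieve J) (hF : IsDiscreteOpfibration F) :
    B ⥤ Collage (pushoutProfunctor J hF) :=
  haveI := collageComparison_isIso J hJ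
  (collageComparison J).strictInv ⋙ collagePushforward hF

theorem pushoutInl_isDiscreteOpfibration (hJ : IsCosieve J) (hF : IsDiscreteOpfibration F) :
    IsDiscreteOpfibration (pushoutInl hJ hF) :=
  have := collageComparison_isIso J hJ
  (IsDiscreteOpfibration.strictInv (collageComparison J)).comp
    (collagePushforward_isDiscreteOpfibration hF)

theorem comp_pushoutInl (hJ : IsCosieve J) (hF : IsDiscreteOpfibration F) :
    J ⋙ pushoutInl hJ hF = F ⋙ Collage.inr := by
  have := collageComparison_isIso J hJ
  change Collage.inr ⋙ (collageComparison J ⋙ (collageComparison J).strictInv) ⋙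
    collagePushforward hF = _
  rw [Functor.comp_strictInv]
  rfl

variable {E : Type u₁} [Category.{v} E] {G₁ : B ⥤ E} {G₂ : C ⥤ E}

noncomputable def pushoutDesc (hF : IsDiscreteOpfibration F) (hG : J ⋙ G₁ = F ⋙ G₂) :
    Collage (pushoutProfunctor J hF) ⥤ E :=
  Collage.desc ((outsideRange J).ι ⋙ G₁) G₂
    (fun h => G₁.map h.2 ≫ eqToHom ((obj_eq_of_comp_eq hG h.1.1).trans (congrArg G₂.obj h.1.2)))
    (fun {x x' _} f h => by
      obtain ⟨⟨a, rfl⟩, g⟩ := h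
      obtain ⟨g, rfl⟩ : ∃ g' : x'.obj ⟶ J.obj a, g' = g := ⟨g, rfl⟩
      show G₁.map (f.hom ≫ g) ≫ eqToHom (obj_eq_of_comp_eq hG a) =
        G₁.map f.hom ≫ G₁.map g ≫ eqToHom (obj_eq_of_comp_eq hG a)
      rw [G₁.map_comp, Category.assoc])
    (fun {x _ c'} h k => by
      obtain ⟨⟨a, e⟩, g⟩ := h
      obtain ⟨g, rfl⟩ : ∃ g' : x.obj ⟶ J.obj a, g' = g := ⟨g, rfl⟩
      show G₁.map (g ≫ J.map (hF.lift (⟨c', eqToHom e ≫ k⟩ : Out (F.obj a))).2) ≫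
          eqToHom ((obj_eq_of_comp_eq hG _).trans (congrArg G₂.obj (hF.obj_lift_fst _))) =
        (G₁.map g ≫ eqToHom ((obj_eq_of_comp_eq hG a).trans (congrArg G₂.obj e))) ≫ G₂.map k
      rw [G₁.map_comp, map_eq_of_comp_eq hG, hF.map_lift_snd]
      simp [eqToHom_map])

theorem collagePushforward_comp_pushoutDesc (hF : IsDiscreteOpfibration F)
    (hG : J ⋙ G₁ = F ⋙ G₂) :
    collagePushforward hF ⋙ pushoutDesc hF hG = collageComparison J ⋙ G₁ := by
  fapply CategoryTheory.Functor.ext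
  · rintro (x | a)
    · rfl
    · exact (obj_eq_of_comp_eq hG a).symm
  · rintro (x | a) (x' | a') f
    · show G₁.map f.hom = 𝟙 _ ≫ G₁.map f.hom ≫ 𝟙 _
      simp
    · show G₁.map f ≫ eqToHom _ = 𝟙 _ ≫ G₁.map f ≫ eqToHom _
      simp
    · exact f.elim
    · show G₂.map (F.map f) = eqToHom (obj_eq_of_comp_eq hG a).symm ≫ G₁.map (J.map f) ≫
        eqToHom (obj_eq_of_comp_eq hG a')
      simp [map_eq_of_comp_eq hG]

theorem pushoutInl_comp_pushoutDesc (hJ : IsCosieve J) (hF : IsDiscreteOpfibration F)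
    (hG : J ⋙ G₁ = F ⋙ G₂) : pushoutInl hJ hF ⋙ pushoutDesc hF hG = G₁ := by
  have := collageComparison_isIso J hJ
  change (collageComparison J).strictInv ⋙ collagePushforward hF ⋙ pushoutDesc hF hG = G₁
  rw [collagePushforward_comp_pushoutDesc, ← Functor.assoc, Functor.strictInv_comp]
  rfl

end PushoutAlongCosieve

end LensPaper

/-- In any pushout square in `Cat` with sides `J : A ⟶ B` a
cosieve, `F : A ⟶ C` a discrete opfibration, and injections `Fbar : B ⟶ D`,
`Jbar : C ⟶ D`, the pushout `Fbar` of `F` along the cosieve `J` is again a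
discrete opfibration. -/
theorem pushout_of_discreteOpfibration_along_cosieve (A B C D : Cat.{u, u})
    (J : A ⟶ B) (F : A ⟶ C) (Fbar : B ⟶ D) (Jbar : C ⟶ D)
    (hJ : IsCosieve J.toFunctor) (hF : IsDiscreteOpfibration F.toFunctor)
    (hpo : IsPushout J F Fbar Jbar) :
    IsDiscreteOpfibration Fbar.toFunctor := by
  have hsq : J.toFunctor ⋙ Fbar.toFunctor = F.toFunctor ⋙ Jbar.toFunctor :=
    congrArg Cat.Hom.toFunctor hpo.w
  obtain ⟨φ, hφ, hφ'⟩ := hpo.exists_desc (pushoutInl hJ hF).toCatHom Collage.inr.toCatHom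
    (Cat.Hom.ext (comp_pushoutInl hJ hF))
  have hφψ : φ ≫ (pushoutDesc hF hsq).toCatHom = 𝟙 D := by
    refine hpo.hom_ext ?_ ?_
    · rw [← Category.assoc, hφ]
      exact Cat.Hom.ext (pushoutInl_comp_pushoutDesc hJ hF hsq)
    · rw [← Category.assoc, hφ']
      rfl
  have hFbarφ : Fbar.toFunctor ⋙ φ.toFunctor = pushoutInl hJ hF := congrArg Cat.Hom.toFunctor hφ
  exact IsDiscreteOpfibration.of_comp (hFbarφ ▸ pushoutInl_isDiscreteOpfibration hJ hF)
    (mapOut_injective_of_comp_eq_id (congrArg Cat.Hom.toFunctor hφψ))
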